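/- arXiv:1906.07817 — 2 statements merged into one kernel-verified Lean document; each statement's English description precedes it below -/
import Mathlib

section
/- There exists a constant C > 0 depending only on d such that for every F ∈ ℝ^{d×d}, |sym(F - Id)|² ≤ C·dist²(F, SO(d)) + C·min{|F - Id|², |F - Id|⁴}. -/
open Matrix

attribute [local instance] Matrix.frobeniusNormedAddCommGroup Matrix.frobeniusNormedSpace

/-- The special orthogonal group `SO(d)` as a set of matrices. -/
def SpecialOrthogonal (d : ℕ) : Set (Matrix (Fin d) (Fin d) ℝ) :=
  {R | Rᵀ * R = 1 ∧ R.det = 1}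

/-- The symmetric part `sym F = (F + Fᵀ)/2` of a matrix. -/
noncomputable def matSym {d : ℕ} (F : Matrix (Fin d) (Fin d) ℝ) : Matrix (Fin d) (Fin d) ℝ :=
  (2⁻¹ : ℝ) • (F + Fᵀ)

lemma matSym_norm_le {d : ℕ} (M : Matrix (Fin d) (Fin d) ℝ) : ‖matSym M‖ ≤ ‖M‖ := by
  have h : ‖matSym M‖ ≤ (2⁻¹ : ℝ) * (‖M‖ + ‖Mᵀ‖) := by
    rw [matSym]
    calc ‖(2⁻¹ : ℝ) • (M + Mᵀ)‖ = 2⁻¹ * ‖M + Mᵀ‖ := by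
          rw [norm_smul]; simp
      _ ≤ 2⁻¹ * (‖M‖ + ‖Mᵀ‖) := by
          gcongr; exact norm_add_le _ _
  rw [Matrix.frobenius_norm_transpose] at h
  linarith

lemma matSym_add {d : ℕ} (A B : Matrix (Fin d) (Fin d) ℝ) :
    matSym (A + B) = matSym A + matSym B := by
  simp [matSym, Matrix.transpose_add, smul_add]; abel_nf

lemma matSym_so {d : ℕ} (R : Matrix (Fin d) (Fin d) ℝ) (hR : Rᵀ * R = 1) :
    ‖matSym (R - 1)‖ ≤ 2⁻¹ * ‖R - 1‖ ^ 2 := by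
  have key : matSym (R - 1) = (-(2⁻¹ : ℝ)) • ((R - 1)ᵀ * (R - 1)) := by
    have expand : (R - 1)ᵀ * (R - 1) = 1 - Rᵀ - R + 1 := by
      rw [Matrix.transpose_sub, Matrix.transpose_one,
        show (Rᵀ - 1) * (R - 1) = Rᵀ * R - Rᵀ - R + 1 by noncomm_ring, hR]
    rw [expand, matSym]
    ext i j
    simp [Matrix.sub_apply, Matrix.add_apply, Matrix.transpose_apply, Matrix.one_apply]
    ring
  rw [key, norm_smul]
  simp only [norm_neg, Real.norm_eq_abs]
  rw [abs_of_pos (by norm_num : (0:ℝ) < 2⁻¹)]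
  have := Matrix.frobenius_norm_mul (R - 1)ᵀ (R - 1)
  rw [Matrix.frobenius_norm_transpose] at this
  calc (2⁻¹:ℝ) * ‖(R - 1)ᵀ * (R - 1)‖ ≤ 2⁻¹ * (‖R - 1‖ * ‖R - 1‖) := by gcongr
    _ = 2⁻¹ * ‖R - 1‖ ^ 2 := by ring

/-- There exists `C > 0` depending only on `d` such that for every `F`,
`|sym(F - Id)|² ≤ C dist²(F, SO(d)) + C min{|F - Id|², |F - Id|⁴}`. -/
theorem stmt_2 (d : ℕ) (hd : 1 ≤ d) :
    ∃ C : ℝ, 0 < C ∧ ∀ F : Matrix (Fin d) (Fin d) ℝ,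
      ‖matSym (F - 1)‖ ^ 2 ≤
        C * Metric.infDist F (SpecialOrthogonal d) ^ 2 +
          C * min (‖F - 1‖ ^ 2) (‖F - 1‖ ^ 4) := by
  refine ⟨8, by norm_num, fun F => ?_⟩
  set S := SpecialOrthogonal d
  have hS : S.Nonempty := ⟨1, by simp [SpecialOrthogonal, S]⟩
  set D := Metric.infDist F S with hD
  set t := ‖F - 1‖ with ht
  have ht0 : 0 ≤ t := norm_nonneg _
  have hD0 : 0 ≤ D := Metric.infDist_nonneg
  have hDt : D ≤ t := by
    have : dist F 1 = t := by rw [dist_eq_norm]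
    calc D ≤ dist F 1 := Metric.infDist_le_dist_of_mem (by simp [SpecialOrthogonal, S])
      _ = t := this
  have hsym_le : ‖matSym (F - 1)‖ ≤ t := matSym_norm_le _
  -- key estimate: ‖matSym (F - 1)‖ ≤ D + 2 t ^ 2
  have hkey : ‖matSym (F - 1)‖ ≤ D + 2 * t ^ 2 := by
    apply le_of_forall_pos_le_add
    intro ε hε
    set δ := min 1 (ε / (2 + 2 * t)) with hδdef
    have hδ0 : 0 < δ := lt_min one_pos (div_pos hε (by linarith))
    obtain ⟨R, hRS, hRd⟩ := (Metric.infDist_lt_iff hS).mp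
      (show D < D + δ by linarith)
    have hFR : ‖F - R‖ < D + δ := by rwa [← dist_eq_norm]
    have hRnorm : ‖R - 1‖ ≤ ‖F - R‖ + t := by
      calc ‖R - 1‖ = ‖-(F - R) + (F - 1)‖ := by congr 1; abel
        _ ≤ ‖-(F - R)‖ + ‖F - 1‖ := norm_add_le _ _
        _ = ‖F - R‖ + t := by rw [norm_neg]
    have hsplit : matSym (F - 1) = matSym (F - R) + matSym (R - 1) := by
      rw [← matSym_add]; congr 1; abel
    have h1 : ‖matSym (F - 1)‖ ≤ ‖F - R‖ + 2⁻¹ * ‖R - 1‖ ^ 2 := by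
      rw [hsplit]
      calc ‖matSym (F - R) + matSym (R - 1)‖
          ≤ ‖matSym (F - R)‖ + ‖matSym (R - 1)‖ := norm_add_le _ _
        _ ≤ ‖F - R‖ + 2⁻¹ * ‖R - 1‖ ^ 2 :=
            add_le_add (matSym_norm_le _) (matSym_so R hRS.1)
    have hFRt : ‖F - R‖ ≤ t + δ := le_trans hFR.le (by linarith)
    have hR2 : ‖R - 1‖ ≤ 2 * t + δ := by linarith
    have hδ1 : δ ≤ 1 := min_le_left _ _
    have hδε : δ * (2 + 2 * t) ≤ ε := by
      have : δ ≤ ε / (2 + 2 * t) := min_le_right _ _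
      calc δ * (2 + 2 * t) ≤ (ε / (2 + 2 * t)) * (2 + 2 * t) := by
            apply mul_le_mul_of_nonneg_right this; linarith
        _ = ε := by field_simp
    have hsq : ‖R - 1‖ ^ 2 ≤ (2 * t + δ) ^ 2 := by
      apply pow_le_pow_left₀ (norm_nonneg _) hR2 2
    calc ‖matSym (F - 1)‖ ≤ ‖F - R‖ + 2⁻¹ * ‖R - 1‖ ^ 2 := h1
      _ ≤ (D + δ) + 2⁻¹ * (2 * t + δ) ^ 2 := by
          apply add_le_add hFR.le; gcongr
      _ = D + 2 * t ^ 2 + (δ + 2 * t * δ + δ ^ 2 / 2) := by ring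
      _ ≤ D + 2 * t ^ 2 + δ * (2 + 2 * t) := by nlinarith
      _ ≤ D + 2 * t ^ 2 + ε := by linarith
  rcases le_or_gt t 1 with h1 | h1
  · have hmin : min (t ^ 2) (t ^ 4) = t ^ 4 := by
      exact min_eq_right (pow_le_pow_of_le_one ht0 h1 (by norm_num))
    rw [hmin]
    have := hkey
    nlinarith [sq_nonneg (D - 2 * t ^ 2), norm_nonneg (matSym (F - 1)), sq_nonneg D, sq_nonneg (t^2)]
  · have hmin : min (t ^ 2) (t ^ 4) = t ^ 2 := by
      exact min_eq_left (pow_le_pow_right₀ h1.le (by norm_num))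
    rw [hmin]
    nlinarith [sq_nonneg D, norm_nonneg (matSym (F - 1))]
end

section
/- Let F ∈ ℝ^{d×d}, let R̄ ∈ SO(d) be a nearest point of F in SO(d), let G ∈ ℝ^{d×d} with |G - F| ≤ δ for some δ > 0. Then |G - R̄| ≤ max{4δ, 2·dist(G, SO(d))}. -/
open Matrix

attribute [local instance] Matrix.frobeniusNormedAddCommGroup Matrix.frobeniusNormedSpace

/-- If `R̄ ∈ SO(d)` is a nearest point of `F` in `SO(d)` and `|G - F| ≤ δ`, then
`|G - R̄| ≤ max{4δ, 2 dist(G, SO(d))}`. -/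
theorem stmt_10 (d : ℕ) (hd : 1 ≤ d) (F G Rbar : Matrix (Fin d) (Fin d) ℝ) (δ : ℝ) (hδ : 0 < δ)
    (hR : Rbar ∈ SpecialOrthogonal d)
    (hnear : ‖F - Rbar‖ = Metric.infDist F (SpecialOrthogonal d))
    (hGF : ‖G - F‖ ≤ δ) :
    ‖G - Rbar‖ ≤ max (4 * δ) (2 * Metric.infDist G (SpecialOrthogonal d)) := by
  set a := ‖F - Rbar‖ with ha
  have htri : ‖G - Rbar‖ ≤ ‖G - F‖ + a := by
    calc ‖G - Rbar‖ = ‖(G - F) + (F - Rbar)‖ := by rw [sub_add_sub_cancel]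
      _ ≤ ‖G - F‖ + ‖F - Rbar‖ := norm_add_le _ _
  by_cases hcase : a ≤ 3 * δ
  · exact le_max_of_le_left (by linarith)
  · refine le_max_of_le_right ?_
    have hlip : Metric.infDist F (SpecialOrthogonal d)
        ≤ Metric.infDist G (SpecialOrthogonal d) + dist F G :=
      Metric.infDist_le_infDist_add_dist
    have hdFG : dist F G = ‖G - F‖ := by
      rw [dist_eq_norm, ← norm_neg]; congr 1; abel
    rw [hdFG, ← hnear] at hlip
    linarith
end
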